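/- arXiv:1901.00554 — 3 statements merged into one kernel-verified Lean document; each statement's English description precedes it below -/
import Mathlib

section
/- Let a and b be coprime positive integers and k ≥ 1. Then the formal power series over ℤ whose j-th coefficient is 1 if j ∈ R_k(a,b) and 0 otherwise satisfies (∑_{j ∈ R_k(a,b)} X^j) · (1 - X^a) · (1 - X^b) = X^{ab(k-1)} · (1 - X^{ab})². Equivalently, the polynomial p_k(a,b;z) := ∑_{j ∈ R_k(a,b)} z^j equals z^{ab(k-1)}(1 - z^{ab})² / ((1 - z^a)(1 - z^b)). -/
/-!
Write `r(j)` for the number of representations `j = ma + nb`. By coprimality, the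
representations of `j + ab` are the shifts `(m, n) ↦ (m, n + a)` of those of `j` together with
exactly one having `n < a`; so `r(j + ab) = r(j) + 1`, and `r(j) ≤ 1` for `j < ab`. Hence
`r(j) ≥ k` iff `j ≥ ab(k-1)` and `r(j - ab(k-1)) ≥ 1`, which turns the indicator series of
`R_k` into `X^{ab(k-1)} (1 - X^{ab})² ∑ r(j) X^j`, and `∑ r(j) X^j = 1 / ((1 - X^a)(1 - X^b))`.
-/

/-- `repCount a b j` is the number of representations of `j` in the form
`m * a + n * b` with `m, n : ℕ`. -/
noncomputable def repCount (a b j : ℕ) : ℕ :=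
  Nat.card {p : ℕ × ℕ // p.1 * a + p.2 * b = j}

open PowerSeries

section LevelSets

variable (R : Type*) [CommRing R] (r : ℕ → ℕ)

noncomputable def atLeastSeries (k : ℕ) : R⟦X⟧ :=
  mk fun j => if k ≤ r j then 1 else 0

variable {R r}

theorem mk_ite_eq_eq_atLeastSeries_sub (k : ℕ) :
    (mk fun j => if r j = k then (1 : R) else 0) =
      atLeastSeries R r k - atLeastSeries R r (k + 1) := by
  ext j
  simp only [atLeastSeries, map_sub, coeff_mk]
  split_ifs <;> first | omega | simp

variable {c : ℕ} (step : ∀ j, r (j + c) = r j + 1) (small : ∀ j < c, r j ≤ 1)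
include step small

theorem succ_le_iff_of_step {k : ℕ} (hk : 1 ≤ k) (j : ℕ) :
    k + 1 ≤ r j ↔ c ≤ j ∧ k ≤ r (j - c) := by
  by_cases hj : c ≤ j
  · have := step (j - c)
    rw [Nat.sub_add_cancel hj] at this
    omega
  · have := small j (by omega)
    omega

theorem atLeastSeries_succ {k : ℕ} (hk : 1 ≤ k) :
    atLeastSeries R r (k + 1) = X ^ c * atLeastSeries R r k := by
  ext j
  simp only [atLeastSeries, coeff_X_pow_mul', coeff_mk, succ_le_iff_of_step step small hk]
  split_ifs <;> simp_all

theorem atLeastSeries_eq_X_pow_mul {k : ℕ} (hk : 1 ≤ k) :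
    atLeastSeries R r k = X ^ (c * (k - 1)) * atLeastSeries R r 1 := by
  induction k, hk using Nat.le_induction with
  | base => simp
  | succ k hk ih =>
    rw [atLeastSeries_succ step small hk, ih, ← mul_assoc, ← pow_add,
      show k + 1 - 1 = k - 1 + 1 by omega, mul_add_one, add_comm]

theorem atLeastSeries_one_eq :
    atLeastSeries R r 1 = (1 - X ^ c) * mk fun j => (r j : R) := by
  ext j
  simp only [atLeastSeries, sub_mul, one_mul, map_sub, coeff_X_pow_mul', coeff_mk]
  by_cases hj : c ≤ j
  · have := step (j - c)
    rw [Nat.sub_add_cancel hj] at this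
    simp [hj, this]
  · have := small j (by omega)
    interval_cases r j <;> simp [hj]

theorem mk_ite_eq_eq_of_step {k : ℕ} (hk : 1 ≤ k) :
    (mk fun j => if r j = k then (1 : R) else 0) =
      X ^ (c * (k - 1)) * (1 - X ^ c) ^ 2 * mk fun j => (r j : R) := by
  rw [mk_ite_eq_eq_atLeastSeries_sub, atLeastSeries_succ step small hk,
    atLeastSeries_eq_X_pow_mul step small hk, atLeastSeries_one_eq step small]
  ring

end LevelSets

def repSet (a b j : ℕ) : Set (ℕ × ℕ) := {p | p.1 * a + p.2 * b = j}

theorem repCount_eq_ncard (a b j : ℕ) : repCount a b j = (repSet a b j).ncard := rfl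

section Representations

variable {a b : ℕ}

theorem repSet_finite (ha : 0 < a) (hb : 0 < b) (j : ℕ) : (repSet a b j).Finite := by
  refine (Set.finite_Iic j |>.prod (Set.finite_Iic j)).subset ?_
  rintro ⟨m, n⟩ (h : m * a + n * b = j)
  constructor <;> simp only [Set.mem_Iic] <;> nlinarith

theorem eq_of_mem_repSet_of_snd_lt (hab : Nat.Coprime a b) {j : ℕ} {p q : ℕ × ℕ}
    (hp : p ∈ repSet a b j) (hq : q ∈ repSet a b j) (hpa : p.2 < a) (hqa : q.2 < a) :
    p = q := by
  have hpq : p.1 * a + p.2 * b = q.1 * a + q.2 * b := hp.trans hq.symm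
  have hmod : p.2 * b ≡ q.2 * b [MOD a] := by
    simpa [Nat.ModEq, Nat.add_mod, Nat.mul_mod_left] using congrArg (· % a) hpq
  have h2 : p.2 = q.2 := (Nat.ModEq.cancel_right_of_coprime hab hmod).eq_of_lt_of_lt hpa hqa
  have h1 : p.1 * a = q.1 * a := by
    rw [h2] at hpq
    omega
  exact Prod.ext (Nat.eq_of_mul_eq_mul_right (by omega) h1) h2

theorem exists_mem_repSet_add_mul (ha : 0 < a) (hab : Nat.Coprime a b) (j : ℕ) :
    ∃ p ∈ repSet a b (j + a * b), p.2 < a := by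
  have : NeZero a := ⟨ha.ne'⟩
  set n := ((j : ZMod a) * (b : ZMod a)⁻¹).val
  have hn : n < a := ZMod.val_lt _
  have hmod : n * b ≡ j + a * b [MOD a] := by
    rw [← ZMod.natCast_eq_natCast_iff]
    push_cast
    rw [ZMod.natCast_zmod_val, ZMod.natCast_self, mul_assoc,
      mul_comm _ (b : ZMod a), ZMod.coe_mul_inv_eq_one b hab.symm]
    ring
  have hle : n * b ≤ j + a * b := by nlinarith
  obtain ⟨m, hm⟩ := (Nat.modEq_iff_dvd' hle).mp hmod
  refine ⟨(m, n), ?_, hn⟩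
  show m * a + n * b = j + a * b
  rw [mul_comm m, ← hm]
  omega

theorem repCount_add_mul (ha : 0 < a) (hb : 0 < b) (hab : Nat.Coprime a b) (j : ℕ) :
    repCount a b (j + a * b) = repCount a b j + 1 := by
  obtain ⟨p, hp, hpa⟩ := exists_mem_repSet_add_mul ha hab j
  let shift : ℕ × ℕ → ℕ × ℕ := fun q => (q.1, q.2 + a)
  have hshift : Function.Injective shift := fun q q' h => by
    simp only [shift, Prod.mk.injEq] at h
    exact Prod.ext h.1 (by omega)
  have hset : repSet a b (j + a * b) = insert p (shift '' repSet a b j) := by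
    ext ⟨m, n⟩
    simp only [Set.mem_insert_iff, Set.mem_image, repSet, Set.mem_ofPred_eq, shift]
    constructor
    · intro h
      by_cases hn : a ≤ n
      · refine Or.inr ⟨(m, n - a), ?_, by simp [Nat.sub_add_cancel hn]⟩
        have : a * b ≤ n * b := Nat.mul_le_mul_right b hn
        simp only [Nat.sub_mul]
        omega
      · exact Or.inl (eq_of_mem_repSet_of_snd_lt hab h hp (by omega) hpa)
    · rintro (rfl | ⟨q, hq, hqe⟩)
      · exact hp
      · simp only [Prod.mk.injEq] at hqe
        rw [← hqe.1, ← hqe.2, add_mul, ← add_assoc, hq]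
  have hp' : p ∉ shift '' repSet a b j := by
    rintro ⟨q, -, rfl⟩
    simp [shift] at hpa
  rw [repCount_eq_ncard, repCount_eq_ncard, hset,
    Set.ncard_insert_of_notMem hp' ((repSet_finite ha hb j).image shift),
    Set.ncard_image_of_injective _ hshift]

theorem repCount_le_one_of_lt (ha : 0 < a) (hb : 0 < b) (hab : Nat.Coprime a b) {j : ℕ}
    (hj : j < a * b) : repCount a b j ≤ 1 := by
  have snd_lt : ∀ p ∈ repSet a b j, p.2 < a := fun p (hp : _ = j) => by
    by_contra! h
    have := Nat.mul_le_mul_right b h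
    omega
  rw [repCount_eq_ncard, Set.ncard_le_one_iff (repSet_finite ha hb j)]
  exact fun hp hq => eq_of_mem_repSet_of_snd_lt hab hp hq (snd_lt _ hp) (snd_lt _ hq)

end Representations

section Multiples

variable (R : Type*) [CommRing R]

noncomputable def multiplesSeries (a : ℕ) : R⟦X⟧ :=
  mk fun j => if a ∣ j then 1 else 0

variable {R} {a b : ℕ}

theorem multiplesSeries_mul_one_sub_X_pow (ha : 0 < a) :
    multiplesSeries R a * (1 - X ^ a) = 1 := by
  ext j
  simp only [multiplesSeries, mul_sub, mul_one, map_sub, coeff_mul_X_pow', coeff_mk, coeff_one]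
  by_cases hj : a ≤ j
  · have hj0 : j ≠ 0 := by omega
    simp [hj, hj0, Nat.dvd_sub_iff_left hj dvd_rfl]
  · rcases Nat.eq_zero_or_pos j with rfl | hj0
    · simp [hj]
    · simp [hj, hj0.ne', Nat.not_dvd_of_pos_of_lt hj0 (not_le.mp hj)]

theorem multiplesSeries_mul_multiplesSeries (ha : 0 < a) (hb : 0 < b) :
    multiplesSeries R a * multiplesSeries R b = mk fun j => (repCount a b j : R) := by
  classical
  ext j
  simp only [multiplesSeries, coeff_mul, coeff_mk, ite_zero_mul_ite_zero, mul_one,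
    Finset.sum_boole]
  congr 1
  rw [repCount_eq_ncard, ← Set.ncard_coe_finset]
  symm
  refine Set.ncard_congr (fun p _ => (p.1 * a, p.2 * b)) ?_ ?_ ?_
  · rintro ⟨m, n⟩ (hp : _ = j)
    simp [hp]
  · rintro ⟨m, n⟩ ⟨m', n'⟩ - - h
    simp only [Prod.mk.injEq] at h
    rw [Nat.eq_of_mul_eq_mul_right ha h.1, Nat.eq_of_mul_eq_mul_right hb h.2]
  · rintro ⟨x, y⟩ hp
    simp only [Finset.coe_filter, Finset.HasAntidiagonal.mem_antidiagonal,
      Set.mem_ofPred_eq] at hp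
    obtain ⟨rfl, ⟨m, rfl⟩, ⟨n, rfl⟩⟩ := hp
    exact ⟨(m, n), show m * a + n * b = _ by ring, by simp [mul_comm]⟩

end Multiples

/-- For `k ≥ 1`, the generating function of the set `R_k(a,b)` of integers with exactly
`k` representations satisfies
`(∑_{j ∈ R_k(a,b)} X^j) * (1 - X^a) * (1 - X^b) = X^(a*b*(k-1)) * (1 - X^(a*b))^2`. -/
theorem frobenius_genfct_Rk (a b k : ℕ) (ha : 0 < a) (hb : 0 < b) (hab : Nat.Coprime a b)
    (hk : 1 ≤ k) :
    (PowerSeries.mk fun j => if repCount a b j = k then (1 : ℤ) else 0) *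
        (1 - (PowerSeries.X : PowerSeries ℤ) ^ a) * (1 - (PowerSeries.X : PowerSeries ℤ) ^ b) =
      (PowerSeries.X : PowerSeries ℤ) ^ (a * b * (k - 1)) *
        (1 - (PowerSeries.X : PowerSeries ℤ) ^ (a * b)) ^ 2 := by
  rw [mk_ite_eq_eq_of_step (repCount_add_mul ha hb hab) (fun _ => repCount_le_one_of_lt ha hb hab)
    hk, ← multiplesSeries_mul_multiplesSeries ha hb]
  linear_combination
    (X ^ (a * b * (k - 1)) * (1 - X ^ (a * b)) ^ 2 * multiplesSeries ℤ b * (1 - X ^ b)) *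
        multiplesSeries_mul_one_sub_X_pow (R := ℤ) ha +
      (X ^ (a * b * (k - 1)) * (1 - X ^ (a * b)) ^ 2) *
        multiplesSeries_mul_one_sub_X_pow (R := ℤ) hb
end

section
/- Let a and b be coprime positive integers. Then the sum of all nonnegative integers not representable as ma + nb with m, n ∈ ℕ equals (1/12)(a-1)(b-1)(2ab - a - b - 1); that is, 12·∑_{j ∈ R_0(a,b)} j = (a-1)(b-1)(2ab - a - b - 1). -/
open Finset in
private lemma BS.gauss1 (a : ℕ) : 2 * ∑ n ∈ range a, (n:ℤ) = a * (a-1) := by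
  induction a with
  | zero => simp
  | succ n ih =>
    rw [Finset.sum_range_succ, mul_add, ih]
    push_cast; ring

open Finset in
private lemma BS.gauss2 (a : ℕ) : 6 * ∑ n ∈ range a, (n:ℤ)^2 = a * (a-1) * (2*a-1) := by
  induction a with
  | zero => simp
  | succ n ih =>
    rw [Finset.sum_range_succ, mul_add, ih]
    push_cast; ring

open Finset in
private lemma BS.innerSum (A : ℤ) (q : ℕ) (c : ℤ) :
    2 * ∑ k ∈ Icc 1 q, (c - (k:ℤ)*A) = 2*c*q - A*q*(q+1) := by
  induction q with
  | zero => simp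
  | succ q ih =>
    rw [Finset.sum_Icc_succ_top (Nat.succ_le_succ (Nat.zero_le q)), mul_add, ih]
    push_cast; ring

open Finset in
private lemma BS.mul_mod_injOn (a b : ℕ) (hab : Nat.Coprime a b) :
    ∀ x ∈ range a, ∀ y ∈ range a, x * b % a = y * b % a → x = y := by
  intro x hx y hy h
  rw [Finset.mem_range] at hx hy
  have h2 : x ≡ y [MOD a] := Nat.ModEq.cancel_right_of_coprime hab h
  rwa [Nat.ModEq, Nat.mod_eq_of_lt hx, Nat.mod_eq_of_lt hy] at h2

open Finset in
private lemma BS.image_mul_mod (a b : ℕ) (ha : 0 < a) (hab : Nat.Coprime a b) :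
    (range a).image (fun n => n * b % a) = range a := by
  apply Finset.eq_of_subset_of_card_le
  · intro x hx
    simp only [Finset.mem_image, Finset.mem_range] at hx ⊢
    obtain ⟨n, _, rfl⟩ := hx
    exact Nat.mod_lt _ ha
  · rw [Finset.card_image_of_injOn (fun x hx y hy h => BS.mul_mod_injOn a b hab x hx y hy h)]

open Finset in
private lemma BS.sum_perm (a b : ℕ) (ha : 0 < a) (hab : Nat.Coprime a b) (g : ℕ → ℤ) :
    ∑ n ∈ range a, g (n * b % a) = ∑ n ∈ range a, g n := by
  conv_rhs => rw [← BS.image_mul_mod a b ha hab]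
  rw [Finset.sum_image (BS.mul_mod_injOn a b hab)]

open Finset in
private lemma BS.step (a b n : ℕ) :
    (a:ℤ) * (12 * ∑ k ∈ Icc 1 (n*b/a), ((n*b:ℕ) - (k:ℤ)*a)) =
      6*(((n*b:ℕ):ℤ)^2 - ((n*b%a:ℕ):ℤ)^2 - a*((n*b:ℕ):ℤ) + a*((n*b%a:ℕ):ℤ)) := by
  have h12 : (12 : ℤ) * ∑ k ∈ Icc 1 (n*b/a), ((n*b:ℕ) - (k:ℤ)*a)
      = 6 * (2*((n*b:ℕ):ℤ)*((n*b/a : ℕ):ℤ) - a*((n*b/a:ℕ):ℤ)*(((n*b/a:ℕ):ℤ)+1)) := by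
    rw [show (12:ℤ) = 6 * 2 by norm_num, mul_assoc, BS.innerSum]
  rw [h12]
  have hdm : (a:ℤ) * ((n*b/a : ℕ):ℤ) = ((n*b:ℕ):ℤ) - ((n*b%a:ℕ):ℤ) := by
    have h : ((a * (n*b/a) + n*b%a : ℕ):ℤ) = ((n*b:ℕ):ℤ) := by
      rw [Nat.div_add_mod]
    rw [Nat.cast_add, Nat.cast_mul] at h
    linarith
  linear_combination (6*(-((a:ℤ)*((n*b/a:ℕ):ℤ)) + ((n*b:ℕ):ℤ) + ((n*b%a:ℕ):ℤ) - a)) * hdm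

open Finset in
private lemma BS.key (a b : ℕ) (ha : 0 < a) (hb : 0 < b) (hab : Nat.Coprime a b) :
    12 * ∑ n ∈ range a, ∑ k ∈ Icc 1 (n*b/a), (((n*b:ℕ):ℤ) - (k:ℤ)*a) =
      ((a:ℤ)-1)*((b:ℤ)-1)*(2*a*b - a - b - 1) := by
  have hA : (0:ℤ) < a := by exact_mod_cast ha
  apply mul_left_cancel₀ (ne_of_gt hA)
  calc (a:ℤ) * (12 * ∑ n ∈ range a, ∑ k ∈ Icc 1 (n*b/a), (((n*b:ℕ):ℤ) - (k:ℤ)*a))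
      = ∑ n ∈ range a, (a:ℤ) * (12 * ∑ k ∈ Icc 1 (n*b/a), (((n*b:ℕ):ℤ) - (k:ℤ)*a)) := by
        rw [Finset.mul_sum, Finset.mul_sum]
    _ = ∑ n ∈ range a, 6*(((n*b:ℕ):ℤ)^2 - ((n*b%a:ℕ):ℤ)^2 - a*((n*b:ℕ):ℤ) + a*((n*b%a:ℕ):ℤ)) :=
        Finset.sum_congr rfl fun n _ => BS.step a b n
    _ = 6*(b:ℤ)^2 * (∑ n ∈ range a, (n:ℤ)^2) - 6 * (∑ n ∈ range a, ((n*b%a:ℕ):ℤ)^2)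
        - 6*(a:ℤ)*(b:ℤ)*(∑ n ∈ range a, (n:ℤ)) + 6*(a:ℤ)*(∑ n ∈ range a, ((n*b%a:ℕ):ℤ)) := by
        simp only [Finset.mul_sum, ← Finset.sum_sub_distrib, ← Finset.sum_add_distrib]
        exact Finset.sum_congr rfl fun n _ => by push_cast; ring
    _ = (a:ℤ) * (((a:ℤ)-1)*((b:ℤ)-1)*(2*a*b - a - b - 1)) := by
        rw [BS.sum_perm a b ha hab (fun m => (m:ℤ)^2), BS.sum_perm a b ha hab (fun m => (m:ℤ))]
        have h1 := BS.gauss1 a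
        have h2 := BS.gauss2 a
        linear_combination ((b:ℤ)^2 - 1) * h2 + 3*(a:ℤ)*(1 - (b:ℤ)) * h1

private lemma BS.repCount_eq_zero_iff (a b j : ℕ) (ha : 0 < a) (hb : 0 < b) :
    repCount a b j = 0 ↔ ¬ ∃ m n : ℕ, m * a + n * b = j := by
  have hfin : ({p : ℕ × ℕ | p.1 * a + p.2 * b = j}).Finite := by
    apply Set.Finite.subset (Set.finite_Iic (j, j))
    rintro ⟨m, n⟩ h
    simp only [Set.mem_setOf_eq] at h
    constructor
    · calc m ≤ m * a := Nat.le_mul_of_pos_right m ha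
        _ ≤ j := by omega
    · calc n ≤ n * b := Nat.le_mul_of_pos_right n hb
        _ ≤ j := by omega
  have : Finite {p : ℕ × ℕ // p.1 * a + p.2 * b = j} := hfin
  rw [repCount, Nat.card_eq_zero]
  simp only [not_exists]
  constructor
  · rintro (h | h)
    · intro m n hmn
      exact h.elim' ⟨(m, n), hmn⟩
    · exact absurd h (not_infinite_iff_finite.mpr this)
  · intro h
    left
    constructor
    rintro ⟨⟨m, n⟩, hmn⟩
    exact h m n hmn

open Finset in
private lemma BS.nonrep_to_pair (a b j : ℕ) (ha : 0 < a) (hb : 0 < b) (hab : Nat.Coprime a b)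
    (hj : ¬ ∃ m n : ℕ, m * a + n * b = j) :
    ∃ n k : ℕ, n < a ∧ 1 ≤ k ∧ k ≤ n * b / a ∧ n * b - k * a = j := by
  have hmem : j % a ∈ (range a).image (fun n => n * b % a) := by
    rw [BS.image_mul_mod a b ha hab]
    exact Finset.mem_range.mpr (Nat.mod_lt _ ha)
  simp only [Finset.mem_image, Finset.mem_range] at hmem
  obtain ⟨n, hn, hmod⟩ := hmem
  have hbig : j < n * b := by
    by_contra hle
    push_neg at hle
    have hdvd : a ∣ j - n * b := (Nat.modEq_iff_dvd' hle).mp hmod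
    obtain ⟨m, hm⟩ := hdvd
    exact hj ⟨m, n, by rw [Nat.mul_comm m a]; omega⟩
  have hdvd : a ∣ n * b - j := (Nat.modEq_iff_dvd' (le_of_lt hbig)).mp hmod.symm
  obtain ⟨k, hk⟩ := hdvd
  rw [Nat.mul_comm a k] at hk
  refine ⟨n, k, hn, ?_, ?_, by omega⟩
  · rcases Nat.eq_zero_or_pos k with rfl | h
    · omega
    · exact h
  · rw [Nat.le_div_iff_mul_le ha]
    omega

private lemma BS.pair_to_nonrep (a b n k : ℕ) (ha : 0 < a) (hb : 0 < b) (hab : Nat.Coprime a b)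
    (hn : n < a) (hk1 : 1 ≤ k) (hk2 : k ≤ n * b / a) :
    ¬ ∃ m n' : ℕ, m * a + n' * b = n * b - k * a := by
  have hka : k * a ≤ n * b := (Nat.le_div_iff_mul_le ha).mp hk2
  rintro ⟨m, n', hmn⟩
  have heq : m * a + n' * b + k * a = n * b := by omega
  have hlt : n' < n := by
    have : n' * b < n * b := by
      have : 0 < k * a := Nat.mul_pos hk1 ha
      omega
    exact Nat.lt_of_mul_lt_mul_right this
  have hd : a ∣ (n - n') * b := by
    refine ⟨m + k, ?_⟩
    rw [Nat.sub_mul, Nat.mul_comm a (m+k), Nat.add_mul]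
    omega
  have hd2 : a ∣ n - n' := (Nat.Coprime.dvd_of_dvd_mul_right hab) hd
  have : a ≤ n - n' := Nat.le_of_dvd (by omega) hd2
  omega

private lemma BS.phi_inj (a b : ℕ) (ha : 0 < a) (hab : Nat.Coprime a b)
    (n₁ k₁ n₂ k₂ : ℕ) (hn₁ : n₁ < a) (hk₁ : k₁ * a ≤ n₁ * b)
    (hn₂ : n₂ < a) (hk₂ : k₂ * a ≤ n₂ * b)
    (h : n₁ * b - k₁ * a = n₂ * b - k₂ * a) : n₁ = n₂ ∧ k₁ = k₂ := by
  have hz : (n₁:ℤ) * b - k₁ * a = (n₂:ℤ) * b - k₂ * a := by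
    have := congrArg (Nat.cast : ℕ → ℤ) h
    rwa [Nat.cast_sub hk₁, Nat.cast_sub hk₂, Nat.cast_mul, Nat.cast_mul,
      Nat.cast_mul, Nat.cast_mul] at this
  have hcop : IsCoprime (a:ℤ) (b:ℤ) := Nat.isCoprime_iff_coprime.mpr hab
  have hd : (a:ℤ) ∣ ((n₁:ℤ) - n₂) := by
    refine hcop.dvd_of_dvd_mul_right ⟨(k₁:ℤ) - k₂, by linarith [hz]⟩
  have hd' : a ∣ ((n₁:ℤ) - n₂).natAbs := by
    simpa using Int.natAbs_dvd_natAbs.mpr hd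
  have h0 : ((n₁:ℤ) - n₂).natAbs = 0 := by
    by_contra h0
    have := Nat.le_of_dvd (Nat.pos_of_ne_zero h0) hd'
    omega
  have hnn : n₁ = n₂ := by omega
  subst hnn
  have : k₁ * a = k₂ * a := by omega
  exact ⟨rfl, Nat.eq_of_mul_eq_mul_right ha this⟩

open Finset in
/-- Brown–Shiue: twelve times the sum of all nonrepresentable integers equals
`(a-1)(b-1)(2ab - a - b - 1)`. -/
theorem s0_eq (a b : ℕ) (ha : 0 < a) (hb : 0 < b) (hab : Nat.Coprime a b) :
    12 * (∑ᶠ j ∈ {j : ℕ | repCount a b j = 0}, j) =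
      (a - 1) * (b - 1) * (2 * a * b - a - b - 1) := by
  set S : Finset ((_ : ℕ) × ℕ) := (range a).sigma (fun n => Icc 1 (n*b/a)) with hS
  set φ : ((_ : ℕ) × ℕ) → ℕ := fun p => p.1 * b - p.2 * a with hφ
  have hmemS : ∀ p : ((_ : ℕ) × ℕ), p ∈ S ↔ p.1 < a ∧ 1 ≤ p.2 ∧ p.2 ≤ p.1 * b / a := by
    intro p
    simp [hS, Finset.mem_sigma, Finset.mem_range, Finset.mem_Icc, and_assoc]
  have hinj : ∀ p ∈ S, ∀ q ∈ S, φ p = φ q → p = q := by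
    rintro ⟨n₁, k₁⟩ hp ⟨n₂, k₂⟩ hq h
    rw [hmemS] at hp hq
    obtain ⟨h1, h2⟩ := BS.phi_inj a b ha hab n₁ k₁ n₂ k₂ hp.1
      ((Nat.le_div_iff_mul_le ha).mp hp.2.2) hq.1
      ((Nat.le_div_iff_mul_le ha).mp hq.2.2) h
    subst h1; subst h2; rfl
  have hset : {j : ℕ | repCount a b j = 0} = ↑(S.image φ) := by
    ext j
    simp only [Set.mem_setOf_eq, Finset.coe_image, Set.mem_image, Finset.mem_coe]
    rw [BS.repCount_eq_zero_iff a b j ha hb]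
    constructor
    · intro hj
      obtain ⟨n, k, hn, hk1, hk2, hnk⟩ := BS.nonrep_to_pair a b j ha hb hab hj
      exact ⟨⟨n, k⟩, (hmemS ⟨n, k⟩).mpr ⟨hn, hk1, hk2⟩, hnk⟩
    · rintro ⟨⟨n, k⟩, hp, rfl⟩
      rw [hmemS] at hp
      exact BS.pair_to_nonrep a b n k ha hb hab hp.1 hp.2.1 hp.2.2
  rw [hset, finsum_mem_coe_finset, Finset.sum_image hinj, Finset.sum_sigma]
  apply Nat.cast_injective (R := ℤ)
  simp only [hφ]
  rw [Nat.cast_mul]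
  have hL : ∀ n ∈ range a, ((∑ k ∈ Icc 1 (n*b/a), (n * b - k * a) : ℕ) : ℤ)
      = ∑ k ∈ Icc 1 (n*b/a), (((n*b:ℕ):ℤ) - (k:ℤ)*a) := by
    intro n _
    rw [Nat.cast_sum]
    refine Finset.sum_congr rfl fun k hk => ?_
    have hka : k * a ≤ n * b := (Nat.le_div_iff_mul_le ha).mp (Finset.mem_Icc.mp hk).2
    rw [Nat.cast_sub hka]
    push_cast; ring
  rw [show ((∑ n ∈ range a, ∑ k ∈ Icc 1 (n*b/a), (n * b - k * a) : ℕ) : ℤ)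
      = ∑ n ∈ range a, ∑ k ∈ Icc 1 (n*b/a), (((n*b:ℕ):ℤ) - (k:ℤ)*a) by
    rw [Nat.cast_sum]; exact Finset.sum_congr rfl hL]
  rw [show ((12:ℕ):ℤ) = 12 from rfl, BS.key a b ha hb hab]
  rcases Nat.lt_or_ge a 2 with ha2 | ha2
  · interval_cases a
    norm_num
  rcases Nat.lt_or_ge b 2 with hb2 | hb2
  · interval_cases b
    norm_num
  have hab2 : a + b + 1 ≤ 2 * (a * b) := by nlinarith
  have e1 : ((a - 1 : ℕ):ℤ) = (a:ℤ) - 1 := by omega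
  have e2 : ((b - 1 : ℕ):ℤ) = (b:ℤ) - 1 := by omega
  have e3 : ((2*a*b - a - b - 1 : ℕ):ℤ) = 2*((a*b : ℕ):ℤ) - a - b - 1 := by
    have h2 : 2*a*b = 2*(a*b) := by ring
    rw [h2]
    omega
  rw [Nat.cast_mul, Nat.cast_mul, e1, e2, e3]
  push_cast
  ring
end

section
/- Let a and b be coprime positive integers, k ≥ 1, and m ≥ 0. Then s_k^m(a,b) = ∑_{λ+μ+ν=m} (m!/(λ!·μ!·ν!)) · a^{λ+μ} · b^{λ+ν} · (k-1)^λ · (∑_{j=0}^{b-1} j^μ) · (∑_{j=0}^{a-1} j^ν), where the outer sum ranges over all triples (λ,μ,ν) of nonnegative integers with λ + μ + ν = m. -/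
/-!
Write `c = a * b`. By coprimality every `j = t * c + x * a + y * b` with `x < b`, `y < a` has
exactly the `t + 1` representations `(x + u * b, y + v * a)` with `u + v = t`, and every
representable `j` has this normal form. Hence `R_k(a,b)` is the image of `[0,b) × [0,a)` under
`(x, y) ↦ (k - 1) * c + x * a + y * b`, and the formula is the trinomial expansion of
`((k - 1) * c + x * a + y * b) ^ m` summed over that box.
-/

open Finset Nat

theorem Nat.factorial_div_factorial_mul_factorial_mul_factorial (l μ ν : ℕ) :
    (l + (μ + ν))! / (l ! * μ ! * ν !) = (l + (μ + ν)).choose l * (μ + ν).choose μ := by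
  refine Nat.div_eq_of_eq_mul_left (by positivity) ?_
  rw [Nat.choose_symm_add, Nat.choose_symm_add, ← Nat.add_choose_mul_factorial_mul_factorial l,
    ← Nat.add_choose_mul_factorial_mul_factorial μ ν]
  ring

theorem add_add_pow_eq_sum_antidiagonal {R : Type*} [CommSemiring R] (x y z : R) (m : ℕ) :
    (x + y + z) ^ m = ∑ p ∈ antidiagonal m, ∑ q ∈ antidiagonal p.2,
      ((m ! / (p.1 ! * q.1 ! * q.2 !) : ℕ) : R) * (x ^ p.1 * y ^ q.1 * z ^ q.2) := by
  rw [add_assoc, (Commute.all _ _).add_pow']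
  refine sum_congr rfl fun ⟨l, n⟩ hp => ?_
  rw [(Commute.all _ _).add_pow', mul_sum, smul_sum]
  refine sum_congr rfl fun ⟨μ, ν⟩ hq => ?_
  rw [HasAntidiagonal.mem_antidiagonal] at hp hq
  subst hp hq
  rw [Nat.factorial_div_factorial_mul_factorial_mul_factorial]
  simp only [nsmul_eq_mul, Nat.cast_mul]
  ring

theorem mul_add_mul_eq_div_add_div_mul_add_mod (a b p q : ℕ) :
    p * a + q * b = (p / b + q / a) * (a * b) + p % b * a + q % a * b := by
  conv_lhs => rw [← Nat.div_add_mod' p b, ← Nat.div_add_mod' q a]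
  ring

section NormalForm

variable {a b : ℕ}

theorem Nat.Coprime.normal_form_injective (hab : Coprime a b) {t t' x x' y y' : ℕ}
    (hx : x < b) (hx' : x' < b) (hy : y < a) (hy' : y' < a)
    (h : t * (a * b) + x * a + y * b = t' * (a * b) + x' * a + y' * b) :
    t = t' ∧ x = x' ∧ y = y' := by
  have hxx' : x = x' := by
    refine (Nat.ModEq.cancel_right_of_coprime hab.symm ?_).eq_of_lt_of_lt hx hx'
    have := congrArg (· % b) h
    simp only [Nat.ModEq] at this ⊢
    simpa [Nat.add_mod, ← mul_assoc] using this
  have hyy' : y = y' := by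
    refine (Nat.ModEq.cancel_right_of_coprime hab ?_).eq_of_lt_of_lt hy hy'
    have := congrArg (· % a) h
    simp only [Nat.ModEq] at this ⊢
    simpa [Nat.add_mod, mul_comm a b, ← mul_assoc] using this
  subst hxx' hyy'
  have hc : 0 < a * b := Nat.mul_pos (by omega) (by omega)
  exact ⟨Nat.eq_of_mul_eq_mul_right hc (by simpa using h), rfl, rfl⟩

theorem repCount_normal_form (hab : Coprime a b) {x y : ℕ} (hx : x < b) (hy : y < a) (t : ℕ) :
    repCount a b (t * (a * b) + x * a + y * b) = t + 1 := by
  set f : ℕ × ℕ → ℕ × ℕ := fun uv => (x + uv.1 * b, y + uv.2 * a)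
  have hf : Function.Injective f := by
    rintro ⟨u, v⟩ ⟨u', v'⟩ h
    simp only [f, Prod.mk.injEq, Nat.add_left_cancel_iff] at h
    exact Prod.ext (Nat.eq_of_mul_eq_mul_right (by omega) h.1)
      (Nat.eq_of_mul_eq_mul_right (by omega) h.2)
  have hreps : {p : ℕ × ℕ | p.1 * a + p.2 * b = t * (a * b) + x * a + y * b} =
      f '' ↑(antidiagonal t) := by
    ext ⟨p, q⟩
    simp only [Set.mem_ofPred_eq, Set.mem_image, Finset.mem_coe, HasAntidiagonal.mem_antidiagonal,
      Prod.exists, f, Prod.mk.injEq]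
    constructor
    · intro h
      rw [mul_add_mul_eq_div_add_div_mul_add_mod] at h
      obtain ⟨rfl, rfl, rfl⟩ := hab.normal_form_injective (Nat.mod_lt _ (by omega)) hx
        (Nat.mod_lt _ (by omega)) hy h
      exact ⟨p / b, q / a, rfl, Nat.mod_add_div' p b, Nat.mod_add_div' q a⟩
    · rintro ⟨u, v, rfl, rfl, rfl⟩
      ring
  rw [repCount, ← Set.coe_ofPred, hreps, Nat.card_image_of_injective hf, Nat.card_coe_set_eq,
    Set.ncard_coe_finset, Finset.Nat.card_antidiagonal]

theorem setOf_repCount_eq (ha : 0 < a) (hb : 0 < b) (hab : Coprime a b) {k : ℕ} (hk : 1 ≤ k) :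
    {j | repCount a b j = k} =
      ↑((range b ×ˢ range a).image fun p => (k - 1) * (a * b) + p.1 * a + p.2 * b) := by
  ext j
  simp only [Set.mem_ofPred_eq, coe_image, coe_product, coe_range, Set.mem_image, Set.mem_prod,
    Set.mem_Iio, Prod.exists]
  constructor
  · intro hj
    obtain ⟨⟨⟨p, q⟩, hpq⟩⟩ : Nonempty {p : ℕ × ℕ // p.1 * a + p.2 * b = j} :=
      (Nat.card_ne_zero.mp (by rw [← repCount, hj]; omega)).1
    rw [mul_add_mul_eq_div_add_div_mul_add_mod] at hpq
    subst hpq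
    rw [repCount_normal_form hab (Nat.mod_lt _ hb) (Nat.mod_lt _ ha)] at hj
    exact ⟨p % b, q % a, ⟨Nat.mod_lt _ hb, Nat.mod_lt _ ha⟩, by rw [← hj, Nat.add_sub_cancel]⟩
  · rintro ⟨x, y, ⟨hx, hy⟩, rfl⟩
    rw [repCount_normal_form hab hx hy]
    omega

theorem injOn_normal_form (hab : Coprime a b) (t : ℕ) :
    Set.InjOn (fun p : ℕ × ℕ => t * (a * b) + p.1 * a + p.2 * b) ↑(range b ×ˢ range a) := by
  rintro ⟨x, y⟩ hxy ⟨x', y'⟩ hxy' h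
  simp only [coe_product, coe_range, Set.mem_prod, Set.mem_Iio] at hxy hxy'
  obtain ⟨-, rfl, rfl⟩ := hab.normal_form_injective hxy.1 hxy'.1 hxy.2 hxy'.2 h
  rfl

end NormalForm

/-- The `m`-th power sum over `R_k(a,b)` equals
`∑_{λ+μ+ν=m} m!/(λ!μ!ν!) a^(λ+μ) b^(λ+ν) (k-1)^λ (∑_{j<b} j^μ) (∑_{j<a} j^ν)`. -/
theorem power_sum_eq (a b k m : ℕ) (ha : 0 < a) (hb : 0 < b)
    (hab : Nat.Coprime a b) (hk : 1 ≤ k) :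
    (∑ᶠ j ∈ {j : ℕ | repCount a b j = k}, j ^ m) =
      ∑ x ∈ Finset.HasAntidiagonal.antidiagonal m, ∑ y ∈ Finset.HasAntidiagonal.antidiagonal x.2,
        Nat.factorial m / (Nat.factorial x.1 * Nat.factorial y.1 * Nat.factorial y.2) *
          a ^ (x.1 + y.1) * b ^ (x.1 + y.2) * (k - 1) ^ x.1 *
          (∑ j ∈ Finset.range b, j ^ y.1) * (∑ j ∈ Finset.range a, j ^ y.2) := by
  rw [setOf_repCount_eq ha hb hab hk, finsum_mem_coe_finset, sum_image (injOn_normal_form hab _)]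
  simp_rw [add_add_pow_eq_sum_antidiagonal, Nat.cast_id]
  rw [sum_comm]
  refine sum_congr rfl fun p _ => ?_
  rw [sum_comm]
  refine sum_congr rfl fun q _ => ?_
  rw [sum_product, mul_assoc _ (∑ j ∈ range b, _), sum_mul_sum, mul_sum]
  refine sum_congr rfl fun x _ => ?_
  rw [mul_sum]
  exact sum_congr rfl fun y _ => by ring
end
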